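/- arXiv:2109.10691 — 9 statements merged into one kernel-verified Lean document; each statement's English description precedes it below -/
import Mathlib

section
/- Let S ⊆ ℚ be a set of time points containing the interval [i₁, i₂] (with i₁ ≤ i₂) and closed under the rule: if [a, b] ⊆ S then [a + t₁, b + t₂] ⊆ S, where 0 ≤ t₁ < t₂. Then the smallest such set contains the whole ray [i₁ + t₁·X, ∞) where X = ⌊(t₁ - (i₂ - i₁))/(t₂ - t₁)⌋ + 1 when t₁ > i₂ - i₁, and contains [i₁, ∞) otherwise. In particular, after finitely many applications the derived intervals overlap and become eventually constant. -/
/-!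
Applying the rule `n` times to `[i₁, i₂]` yields `[i₁ + n t₁, i₂ + n t₂]`. Consecutive intervals
overlap as soon as `t₁ - (i₂ - i₁) ≤ n (t₂ - t₁)`, and their right endpoints grow without bound,
so from that `n` on they chain together into a ray.
-/

open Set Filter

theorem Ici_subset_iUnion_Icc {α : Type*} [LinearOrder α] {a b : ℕ → α} {N : ℕ}
    (hchain : ∀ n ≥ N, a (n + 1) ≤ b n) (hb : Tendsto b atTop atTop) :
    Ici (a N) ⊆ ⋃ n, Icc (a n) (b n) := by
  have hprefix : ∀ k, Icc (a N) (b (N + k)) ⊆ ⋃ n, Icc (a n) (b n) := by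
    intro k
    induction k with
    | zero => exact subset_iUnion_of_subset N subset_rfl
    | succ k ih =>
      rintro x ⟨hax, hxb⟩
      rcases le_or_gt x (b (N + k)) with hx | hx
      · exact ih ⟨hax, hx⟩
      · exact mem_iUnion.2 ⟨N + k + 1, (hchain (N + k) (Nat.le_add_right N k)).trans hx.le, hxb⟩
  intro x hx
  obtain ⟨n, hxn, hNn⟩ := ((hb.eventually_ge_atTop x).and (eventually_ge_atTop N)).exists
  obtain ⟨k, rfl⟩ := Nat.exists_eq_add_of_le hNn
  exact hprefix k ⟨hx, hxn⟩

section RuleClosed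

variable {α : Type*} [Field α] [LinearOrder α] [IsStrictOrderedRing α]

/-- `S` is closed under the rule `◇⁻_{[t₁,t₂]} P → P`. -/
def IsRuleClosed (t₁ t₂ : α) (S : Set α) : Prop :=
  ∀ a b : α, a ≤ b → Icc a b ⊆ S → Icc (a + t₁) (b + t₂) ⊆ S

variable {t₁ t₂ i₁ i₂ : α} {S : Set α}

theorem IsRuleClosed.Icc_iterate_subset (hS : IsRuleClosed t₁ t₂ S) (ht : t₁ ≤ t₂)
    (hi : i₁ ≤ i₂) (hbase : Icc i₁ i₂ ⊆ S) (n : ℕ) :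
    Icc (i₁ + n * t₁) (i₂ + n * t₂) ⊆ S := by
  induction n with
  | zero => simpa using hbase
  | succ n ih =>
    have hle : i₁ + n * t₁ ≤ i₂ + n * t₂ := by gcongr
    convert hS _ _ hle ih using 2 <;> push_cast <;> ring

theorem IsRuleClosed.Ici_subset [Archimedean α] (hS : IsRuleClosed t₁ t₂ S) (ht : t₁ ≤ t₂)
    (ht₂ : 0 < t₂) (hi : i₁ ≤ i₂) (hbase : Icc i₁ i₂ ⊆ S) {X : ℕ}
    (hX : t₁ - (i₂ - i₁) ≤ X * (t₂ - t₁)) :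
    Ici (i₁ + X * t₁) ⊆ S := by
  have hchain : ∀ n ≥ X, i₁ + (n + 1 : ℕ) * t₁ ≤ i₂ + n * t₂ := by
    intro n hn
    have : (X : α) * (t₂ - t₁) ≤ n * (t₂ - t₁) := by
      gcongr
    push_cast
    linarith
  have hunbounded : Tendsto (fun n : ℕ => i₂ + n * t₂) atTop atTop :=
    tendsto_atTop_add_const_left _ _ (tendsto_natCast_atTop_atTop.atTop_mul_const ht₂)
  refine (Ici_subset_iUnion_Icc (a := fun n : ℕ => i₁ + n * t₁) hchain hunbounded).trans ?_
  exact iUnion_subset (hS.Icc_iterate_subset ht hi hbase)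

end RuleClosed

/-- Minimal-model closure of a single diamond-minus rule applied to a fact `P@[i₁,i₂]`:
the smallest set of time points containing `[i₁,i₂]` and closed under
`[a,b] ⊆ S → [a+t₁, b+t₂] ⊆ S`. -/
theorem stmt_0 (t₁ t₂ i₁ i₂ : ℚ) (ht₁ : 0 ≤ t₁) (ht : t₁ < t₂) (hi : i₁ ≤ i₂)
    (C : Set ℚ)
    (hC : C = ⋂₀ {S : Set ℚ | Icc i₁ i₂ ⊆ S ∧
      ∀ a b : ℚ, a ≤ b → Icc a b ⊆ S → Icc (a + t₁) (b + t₂) ⊆ S}) :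
    (t₁ > i₂ - i₁ →
      Ici (i₁ + t₁ * ((⌊(t₁ - (i₂ - i₁)) / (t₂ - t₁)⌋ + 1 : ℤ) : ℚ)) ⊆ C) ∧
    (t₁ ≤ i₂ - i₁ → Ici i₁ ⊆ C) := by
  subst hC
  have ht₂ : 0 < t₂ := ht₁.trans_lt ht
  have hray : ∀ X : ℕ, t₁ - (i₂ - i₁) ≤ X * (t₂ - t₁) → Ici (i₁ + X * t₁) ⊆
      ⋂₀ {S : Set ℚ | Icc i₁ i₂ ⊆ S ∧
        ∀ a b : ℚ, a ≤ b → Icc a b ⊆ S → Icc (a + t₁) (b + t₂) ⊆ S} :=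
    fun X hX => subset_sInter fun S ⟨hbase, hS⟩ => IsRuleClosed.Ici_subset hS ht.le ht₂ hi hbase hX
  constructor
  · intro hgap
    set q := (t₁ - (i₂ - i₁)) / (t₂ - t₁)
    have hq : 0 ≤ q := div_nonneg (by linarith) (by linarith)
    obtain ⟨X, hXq⟩ := Int.eq_ofNat_of_zero_le (by positivity : 0 ≤ ⌊q⌋ + 1)
    have hX : q ≤ X := by
      have := (Int.lt_floor_add_one q).le
      rwa [← Int.cast_one, ← Int.cast_add, hXq, Int.cast_natCast] at this
    rw [hXq, Int.cast_natCast, mul_comm]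
    exact hray X ((div_le_iff₀ (sub_pos.2 ht)).1 hX)
  · intro hoverlap
    simpa using hray 0 (by simpa using hoverlap)
end

section
/- Let t₁, t₂ ∈ ℚ with t₁ < t₂ ≤ 0 and let [i₁, i₂] ⊆ ℚ with i₁ ≤ i₂. Define I_k = [i₁ + k·t₁, i₂ + k·t₂]. Then there exists N ∈ ℕ such that for all k ≥ N, I_k and I_{k+1} overlap, and ⋃_{k≥N} I_k = (-∞, i₂ + N·t₂]. -/
open Set

/-- Backward-propagating cycle with negative interval weight `[t₁,t₂]`, `t₁ < t₂ ≤ 0`: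
eventually consecutive intervals `I_k = [i₁+k·t₁, i₂+k·t₂]` overlap and their union
is the left ray `(-∞, i₂ + N·t₂]`. -/
theorem stmt_3 (t₁ t₂ i₁ i₂ : ℚ) (ht : t₁ < t₂) (ht₂ : t₂ ≤ 0) (hi : i₁ ≤ i₂) :
    ∃ N : ℕ,
      (∀ k : ℕ, N ≤ k → i₁ + (k : ℚ) * t₁ ≤ i₂ + ((k : ℚ) + 1) * t₂) ∧
      (⋃ k : ℕ, ⋃ _h : N ≤ k, Icc (i₁ + (k : ℚ) * t₁) (i₂ + (k : ℚ) * t₂))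
        = Iic (i₂ + (N : ℚ) * t₂) := by
  obtain ⟨N, hN⟩ := exists_nat_ge ((i₁ - i₂ - t₂) / (t₂ - t₁))
  have htd : 0 < t₂ - t₁ := by linarith
  have ht1 : t₁ < 0 := lt_of_lt_of_le ht ht₂
  have hov : ∀ k : ℕ, N ≤ k → i₁ + (k : ℚ) * t₁ ≤ i₂ + ((k : ℚ) + 1) * t₂ := by
    intro k hk
    have hk' : ((i₁ - i₂ - t₂) / (t₂ - t₁)) ≤ (k : ℚ) :=
      hN.trans (by exact_mod_cast hk)
    have h := (div_le_iff₀ htd).mp hk'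
    nlinarith
  refine ⟨N, hov, ?_⟩
  ext x
  simp only [mem_iUnion, mem_Icc, mem_Iic]
  constructor
  · rintro ⟨k, hk, _h1, h2⟩
    have hkN : (N : ℚ) ≤ (k : ℚ) := by exact_mod_cast hk
    nlinarith
  · intro hx
    have hex : ∃ m : ℕ, i₁ + ((N + m : ℕ) : ℚ) * t₁ ≤ x := by
      obtain ⟨m, hm⟩ := exists_nat_ge ((x - i₁) / t₁)
      refine ⟨m, ?_⟩
      have h := (div_le_iff_of_neg ht1).mp hm
      push_cast
      have hN0 : (0 : ℚ) ≤ (N : ℚ) := by positivity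
      nlinarith
    classical
    obtain ⟨m₀, hspec, hmin⟩ : ∃ m : ℕ, (i₁ + ((N + m : ℕ) : ℚ) * t₁ ≤ x) ∧
        ∀ m' : ℕ, m' < m → ¬ (i₁ + ((N + m' : ℕ) : ℚ) * t₁ ≤ x) :=
      ⟨Nat.find hex, Nat.find_spec hex, fun m' hm' => Nat.find_min hex hm'⟩
    refine ⟨N + m₀, Nat.le_add_right _ _, hspec, ?_⟩
    match m₀, hspec, hmin with
    | 0, hspec, _ => simpa using hx
    | (m' + 1), hspec, hmin =>
        have h2 : ¬ (i₁ + ((N + m' : ℕ) : ℚ) * t₁ ≤ x) := hmin m' (Nat.lt_succ_self _)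
        push_neg at h2
        have hov' := hov (N + m') (Nat.le_add_right _ _)
        have hlt : x < i₂ + (((N + m' : ℕ) : ℚ) + 1) * t₂ := lt_of_lt_of_le h2 hov'
        push_cast at hlt ⊢
        linarith
end

section
/- Let S ⊆ ℚ be eventually p-periodic past T (i.e., for all t ≥ T, t ∈ S ↔ t+p ∈ S, with p > 0). Let 0 ≤ t₁ ≤ t₂ and define D(S) = { t : ∃ s ∈ S, t - s ∈ [t₁, t₂] } (the result of applying ◇⁻_{[t₁,t₂]}). Then D(S) is eventually p-periodic past T + t₂. -/
open Set

def EventuallyPeriodic (S : Set ℚ) (p T : ℚ) : Prop :=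
  ∀ t : ℚ, T ≤ t → (t ∈ S ↔ t + p ∈ S)

/-- The diamond-minus operator `◇⁻_{[t₁,t₂]}` preserves eventual `p`-periodicity,
shifting the threshold to `T + t₂`. -/
theorem stmt_6 (S : Set ℚ) (p T t₁ t₂ : ℚ) (hp : 0 < p)
    (hper : EventuallyPeriodic S p T) (ht₁ : 0 ≤ t₁) (ht : t₁ ≤ t₂) :
    EventuallyPeriodic {t : ℚ | ∃ s ∈ S, t - s ∈ Icc t₁ t₂} p (T + t₂) := by
  intro t hT
  constructor
  · rintro ⟨s, hs, h1, h2⟩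
    refine ⟨s + p, ?_, ?_, ?_⟩
    · exact (hper s (by linarith)).mp hs
    · linarith
    · linarith
  · rintro ⟨s, hs, h1, h2⟩
    refine ⟨s - p, ?_, ?_, ?_⟩
    · have := hper (s - p) (by linarith)
      simpa using this.mpr (by simpa using hs)
    · linarith
    · linarith
end

section
/- Let S ⊆ ℚ be eventually p-periodic past T with p > 0. Let 0 ≤ t₁ ≤ t₂ and define B(S) = { t : ∀ s, t - s ∈ [t₁, t₂] → s ∈ S } (the result of applying □⁻_{[t₁,t₂]}). Then B(S) is eventually p-periodic past T + t₂. -/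
open Set

/-- The box-minus operator `□⁻_{[t₁,t₂]}` preserves eventual `p`-periodicity,
shifting the threshold to `T + t₂`. -/
theorem stmt_7 (S : Set ℚ) (p T t₁ t₂ : ℚ) (hp : 0 < p)
    (hper : EventuallyPeriodic S p T) (ht₁ : 0 ≤ t₁) (ht : t₁ ≤ t₂) :
    EventuallyPeriodic {t : ℚ | ∀ s : ℚ, t - s ∈ Icc t₁ t₂ → s ∈ S} p (T + t₂) := by
  intro t hT
  constructor
  · intro h s hs
    obtain ⟨h1, h2⟩ := hs
    have hs' : t - (s - p) ∈ Icc t₁ t₂ := by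
      constructor <;> simp only [mem_Icc] at * <;> linarith
    have hmem := h (s - p) hs'
    have hTs : T ≤ s - p := by linarith
    have := (hper (s - p) hTs).mp hmem
    simpa using this
  · intro h s hs
    obtain ⟨h1, h2⟩ := hs
    have hs' : t + p - (s + p) ∈ Icc t₁ t₂ := by
      constructor <;> linarith
    have hmem := h (s + p) hs'
    have hTs : T ≤ s := by linarith
    exact (hper s hTs).mpr hmem
end

section
/- Let A, B ⊆ ℚ be the smallest sets satisfying (1) [0,3] ⊆ A; (2) if s ∈ A and t - s ∈ [5,6] then t ∈ B; (3) if [t-5, t-4] ⊆ B then t ∈ A. Then A = ⋃_{n∈ℕ} [10n, 10n+3] and B = ⋃_{n∈ℕ} [10n+5, 10n+9]. In particular there is no T such that for all t > T, t ∈ A ↔ T ∈ A. -/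
open Set

/-- Counterexample (Proposition 4): rules `◇⁻_{[5,6]} A → B` and `□⁻_{[4,5]} B → A`
with database `A@[0,3]` produce a period-10, never-constant minimal model. -/
theorem stmt_9 (A B : Set ℚ)
    (hA1 : Icc (0 : ℚ) 3 ⊆ A)
    (hAB : ∀ s t : ℚ, s ∈ A → t - s ∈ Icc (5 : ℚ) 6 → t ∈ B)
    (hBA : ∀ t : ℚ, Icc (t - 5) (t - 4) ⊆ B → t ∈ A)
    (hmin : ∀ A' B' : Set ℚ,
      (Icc (0 : ℚ) 3 ⊆ A' ∧
       (∀ s t : ℚ, s ∈ A' → t - s ∈ Icc (5 : ℚ) 6 → t ∈ B') ∧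
       (∀ t : ℚ, Icc (t - 5) (t - 4) ⊆ B' → t ∈ A')) →
      A ⊆ A' ∧ B ⊆ B') :
    A = (⋃ n : ℕ, Icc (10 * (n : ℚ)) (10 * (n : ℚ) + 3)) ∧
    B = (⋃ n : ℕ, Icc (10 * (n : ℚ) + 5) (10 * (n : ℚ) + 9)) ∧
    ¬ ∃ T : ℚ, ∀ t : ℚ, T < t → (t ∈ A ↔ T ∈ A) := by
  set A' : Set ℚ := ⋃ n : ℕ, Icc (10 * (n : ℚ)) (10 * (n : ℚ) + 3) with hA'
  set B' : Set ℚ := ⋃ n : ℕ, Icc (10 * (n : ℚ) + 5) (10 * (n : ℚ) + 9) with hB'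
  -- A', B' satisfy the closure properties
  have h1 : Icc (0 : ℚ) 3 ⊆ A' := by
    intro x hx
    exact mem_iUnion.2 ⟨0, by simpa using hx⟩
  have h2 : ∀ s t : ℚ, s ∈ A' → t - s ∈ Icc (5 : ℚ) 6 → t ∈ B' := by
    intro s t hs ht
    obtain ⟨n, hn⟩ := mem_iUnion.1 hs
    exact mem_iUnion.2 ⟨n, ⟨by linarith [hn.1, ht.1], by linarith [hn.2, ht.2]⟩⟩
  have h3 : ∀ t : ℚ, Icc (t - 5) (t - 4) ⊆ B' → t ∈ A' := by
    intro t h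
    have h5 := h ⟨le_refl _, by linarith⟩
    have h4 := h ⟨by linarith, le_refl _⟩
    obtain ⟨m, hm⟩ := mem_iUnion.1 h5
    obtain ⟨k, hk⟩ := mem_iUnion.1 h4
    have hkm : k ≤ m := by
      have : (k : ℚ) < (m : ℚ) + 1 := by linarith [hk.1, hm.2]
      exact_mod_cast Nat.lt_add_one_iff.1 (by exact_mod_cast this)
    have hmk : m ≤ k := by
      have : (m : ℚ) < (k : ℚ) + 1 := by linarith [hm.1, hk.2]
      exact_mod_cast Nat.lt_add_one_iff.1 (by exact_mod_cast this)
    have hE : k = m := le_antisymm hkm hmk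
    subst hE
    refine mem_iUnion.2 ⟨k + 1, ⟨?_, ?_⟩⟩
    · push_cast; linarith [hm.1]
    · push_cast; linarith [hk.2]
  obtain ⟨hAsub, hBsub⟩ := hmin A' B' ⟨h1, h2, h3⟩
  -- reverse inclusions by induction
  have stepB : ∀ a : ℚ, Icc a (a + 3) ⊆ A → Icc (a + 5) (a + 9) ⊆ B := by
    intro a h x hx
    by_cases hc : x ≤ a + 6
    · exact hAB a x (h ⟨le_refl _, by linarith⟩) ⟨by linarith [hx.1], by linarith⟩
    · exact hAB (x - 6) x (h ⟨by linarith, by linarith [hx.2]⟩)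
        ⟨by norm_num, by norm_num⟩
  have key : ∀ n : ℕ, Icc (10 * (n : ℚ)) (10 * (n : ℚ) + 3) ⊆ A ∧
      Icc (10 * (n : ℚ) + 5) (10 * (n : ℚ) + 9) ⊆ B := by
    intro n
    induction n with
    | zero =>
      have hA0 : Icc (10 * ((0 : ℕ) : ℚ)) (10 * ((0 : ℕ) : ℚ) + 3) ⊆ A := by
        intro x hx; exact hA1 (by simpa using hx)
      exact ⟨hA0, by simpa using stepB 0 (by simpa using hA0)⟩
    | succ n ih =>
      have hAn : Icc (10 * ((n + 1 : ℕ) : ℚ)) (10 * ((n + 1 : ℕ) : ℚ) + 3) ⊆ A := by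
        intro t ht
        apply hBA
        intro x hx
        apply ih.2
        constructor
        · push_cast at ht ⊢; linarith [ht.1, hx.1]
        · push_cast at ht ⊢; linarith [ht.2, hx.2]
      refine ⟨hAn, ?_⟩
      intro x hx
      exact stepB (10 * ((n + 1 : ℕ) : ℚ)) hAn hx
  have hAeq : A = A' := by
    apply Subset.antisymm hAsub
    intro x hx
    obtain ⟨n, hn⟩ := mem_iUnion.1 hx
    exact (key n).1 hn
  have hBeq : B = B' := by
    apply Subset.antisymm hBsub
    intro x hx
    obtain ⟨n, hn⟩ := mem_iUnion.1 hx
    exact (key n).2 hn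
  refine ⟨hAeq, hBeq, ?_⟩
  rintro ⟨T, hT⟩
  by_cases hTA : T ∈ A
  · rw [hAeq] at hTA
    obtain ⟨n, hn⟩ := mem_iUnion.1 hTA
    have ht : (10 * (n : ℚ) + 4) ∈ A :=
      (hT (10 * (n : ℚ) + 4) (by linarith [hn.2])).2 (hAeq ▸ hTA)
    rw [hAeq] at ht
    obtain ⟨m, hm⟩ := mem_iUnion.1 ht
    have hmn : m ≤ n := by
      have : (m : ℚ) < (n : ℚ) + 1 := by linarith [hm.1]
      exact_mod_cast Nat.lt_add_one_iff.1 (by exact_mod_cast this)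
    have : (m : ℚ) ≤ (n : ℚ) := by exact_mod_cast hmn
    linarith [hm.2]
  · obtain ⟨n, hn⟩ := exists_nat_gt T
    have h10 : (10 * (n : ℚ)) ∈ A := by
      rw [hAeq]
      exact mem_iUnion.2 ⟨n, ⟨le_refl _, by linarith⟩⟩
    have hTn : T < 10 * (n : ℚ) := by
      have := n.cast_nonneg (α := ℚ)
      linarith
    exact hTA ((hT _ hTn).1 h10)
end

section
/- Let A, B, C ⊆ ℚ be the smallest sets satisfying: [0,3] ⊆ A; [2,4] ⊆ B; A ∩ B ⊆ C; if s ∈ C and t - s ∈ [3,5] then t ∈ A; if s ∈ C and t - s ∈ [5,6] then t ∈ B. Then A = ⋃_{n∈ℕ} [5n, 5n+3], B = ⋃_{n∈ℕ} [5n+2, 5n+4], and C = ⋃_{n∈ℕ} [5n+2, 5n+3]. In particular the minimal model is eventually periodic with period 5 but not eventually constant. -/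
open Set

/-- Counterexample (Proposition 2): rules `A ∧ B → C`, `◇⁻_{[3,5]} C → A`,
`◇⁻_{[5,6]} C → B` with database `A@[0,3]`, `B@[2,4]` produce a period-5,
not eventually constant minimal model. -/
theorem stmt_10 (A B C : Set ℚ)
    (hA1 : Icc (0 : ℚ) 3 ⊆ A) (hB1 : Icc (2 : ℚ) 4 ⊆ B)
    (hC1 : A ∩ B ⊆ C)
    (hCA : ∀ s t : ℚ, s ∈ C → t - s ∈ Icc (3 : ℚ) 5 → t ∈ A)
    (hCB : ∀ s t : ℚ, s ∈ C → t - s ∈ Icc (5 : ℚ) 6 → t ∈ B)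
    (hmin : ∀ A' B' C' : Set ℚ,
      (Icc (0 : ℚ) 3 ⊆ A' ∧ Icc (2 : ℚ) 4 ⊆ B' ∧ A' ∩ B' ⊆ C' ∧
       (∀ s t : ℚ, s ∈ C' → t - s ∈ Icc (3 : ℚ) 5 → t ∈ A') ∧
       (∀ s t : ℚ, s ∈ C' → t - s ∈ Icc (5 : ℚ) 6 → t ∈ B')) →
      A ⊆ A' ∧ B ⊆ B' ∧ C ⊆ C') :
    A = (⋃ n : ℕ, Icc (5 * (n : ℚ)) (5 * (n : ℚ) + 3)) ∧
    B = (⋃ n : ℕ, Icc (5 * (n : ℚ) + 2) (5 * (n : ℚ) + 4)) ∧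
    C = (⋃ n : ℕ, Icc (5 * (n : ℚ) + 2) (5 * (n : ℚ) + 3)) ∧
    (∀ t : ℚ, 0 ≤ t → (t ∈ A ↔ t + 5 ∈ A)) ∧
    ¬ ∃ T : ℚ, ∀ t : ℚ, T < t → (t ∈ A ↔ T ∈ A) := by
  set A' : Set ℚ := ⋃ n : ℕ, Icc (5 * (n : ℚ)) (5 * (n : ℚ) + 3) with hA'def
  set B' : Set ℚ := ⋃ n : ℕ, Icc (5 * (n : ℚ) + 2) (5 * (n : ℚ) + 4) with hB'def
  set C' : Set ℚ := ⋃ n : ℕ, Icc (5 * (n : ℚ) + 2) (5 * (n : ℚ) + 3) with hC'def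
  -- Forward: each piece of the unions is contained in A, B, C.
  have hstep : ∀ n : ℕ, Icc (5 * (n : ℚ)) (5 * (n : ℚ) + 3) ⊆ A ∧
      Icc (5 * (n : ℚ) + 2) (5 * (n : ℚ) + 4) ⊆ B := by
    intro n
    induction n with
    | zero =>
      constructor
      · intro t ht
        simp only [Nat.cast_zero, mem_Icc] at ht
        exact hA1 ⟨by linarith [ht.1], by linarith [ht.2]⟩
      · intro t ht
        simp only [Nat.cast_zero, mem_Icc] at ht
        exact hB1 ⟨by linarith [ht.1], by linarith [ht.2]⟩
    | succ n ih =>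
      have hC : Icc (5 * (n : ℚ) + 2) (5 * (n : ℚ) + 3) ⊆ C := by
        intro s hs
        rw [mem_Icc] at hs
        exact hC1 ⟨ih.1 ⟨by linarith [hs.1], by linarith [hs.2]⟩,
          ih.2 ⟨hs.1, by linarith [hs.2]⟩⟩
      constructor
      · intro t ht
        rw [mem_Icc] at ht
        push_cast at ht
        have ht1 : 5 * (n : ℚ) + 5 ≤ t := by linarith [ht.1]
        have ht2 : t ≤ 5 * (n : ℚ) + 8 := by linarith [ht.2]
        set s := max (5 * (n : ℚ) + 2) (t - 5) with hsdef
        have hsC : s ∈ Icc (5 * (n : ℚ) + 2) (5 * (n : ℚ) + 3) :=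
          ⟨le_max_left _ _, max_le (by linarith) (by linarith)⟩
        refine hCA s t (hC hsC) ⟨?_, ?_⟩
        · have : s ≤ t - 3 := max_le (by linarith) (by linarith)
          linarith
        · have : t - 5 ≤ s := le_max_right _ _
          linarith
      · intro t ht
        rw [mem_Icc] at ht
        push_cast at ht
        have ht1 : 5 * (n : ℚ) + 7 ≤ t := by linarith [ht.1]
        have ht2 : t ≤ 5 * (n : ℚ) + 9 := by linarith [ht.2]
        set s := max (5 * (n : ℚ) + 2) (t - 6) with hsdef
        have hsC : s ∈ Icc (5 * (n : ℚ) + 2) (5 * (n : ℚ) + 3) :=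
          ⟨le_max_left _ _, max_le (by linarith) (by linarith)⟩
        refine hCB s t (hC hsC) ⟨?_, ?_⟩
        · have : s ≤ t - 5 := max_le (by linarith) (by linarith)
          linarith
        · have : t - 6 ≤ s := le_max_right _ _
          linarith
  have hA'A : A' ⊆ A := iUnion_subset fun n => (hstep n).1
  have hB'B : B' ⊆ B := iUnion_subset fun n => (hstep n).2
  have hC'C : C' ⊆ C := by
    refine iUnion_subset fun n => fun s hs => ?_
    rw [mem_Icc] at hs
    exact hC1 ⟨(hstep n).1 ⟨by linarith [hs.1], by linarith [hs.2]⟩,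
      (hstep n).2 ⟨hs.1, by linarith [hs.2]⟩⟩
  -- Reverse: the primed sets satisfy all closure conditions.
  have hcast : ∀ n m : ℕ, (n : ℚ) < (m : ℚ) + 1 → n ≤ m := by
    intro n m h
    have : (n : ℚ) < ((m + 1 : ℕ) : ℚ) := by push_cast; linarith
    exact Nat.lt_succ_iff.mp (by exact_mod_cast this)
  have hminp : A ⊆ A' ∧ B ⊆ B' ∧ C ⊆ C' := by
    refine hmin A' B' C' ⟨?_, ?_, ?_, ?_, ?_⟩
    · intro t ht
      rw [mem_Icc] at ht
      exact mem_iUnion.2 ⟨0, by rw [mem_Icc]; push_cast; constructor <;> linarith [ht.1, ht.2]⟩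
    · intro t ht
      rw [mem_Icc] at ht
      exact mem_iUnion.2 ⟨0, by rw [mem_Icc]; push_cast; constructor <;> linarith [ht.1, ht.2]⟩
    · rintro t ⟨htA, htB⟩
      obtain ⟨n, hn⟩ := mem_iUnion.1 htA
      obtain ⟨m, hm⟩ := mem_iUnion.1 htB
      rw [mem_Icc] at hn hm
      have hnm : n = m := by
        have h1 : n ≤ m := hcast n m (by nlinarith [hn.1, hm.2])
        have h2 : m ≤ n := hcast m n (by nlinarith [hm.1, hn.2])
        omega
      subst hnm
      exact mem_iUnion.2 ⟨n, by rw [mem_Icc]; exact ⟨hm.1, hn.2⟩⟩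
    · intro s t hs ht
      obtain ⟨n, hn⟩ := mem_iUnion.1 hs
      rw [mem_Icc] at hn ht
      refine mem_iUnion.2 ⟨n + 1, ?_⟩
      rw [mem_Icc]; push_cast
      constructor <;> linarith [hn.1, hn.2, ht.1, ht.2]
    · intro s t hs ht
      obtain ⟨n, hn⟩ := mem_iUnion.1 hs
      rw [mem_Icc] at hn ht
      refine mem_iUnion.2 ⟨n + 1, ?_⟩
      rw [mem_Icc]; push_cast
      constructor <;> linarith [hn.1, hn.2, ht.1, ht.2]
  obtain ⟨hAA', hBB', hCC'⟩ := hminp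
  have eqA : A = A' := Subset.antisymm hAA' hA'A
  have eqB : B = B' := Subset.antisymm hBB' hB'B
  have eqC : C = C' := Subset.antisymm hCC' hC'C
  refine ⟨eqA, eqB, eqC, ?_, ?_⟩
  · intro t ht0
    rw [eqA]
    constructor
    · intro h
      obtain ⟨n, hn⟩ := mem_iUnion.1 h
      rw [mem_Icc] at hn
      refine mem_iUnion.2 ⟨n + 1, ?_⟩
      rw [mem_Icc]; push_cast
      constructor <;> linarith [hn.1, hn.2]
    · intro h
      obtain ⟨n, hn⟩ := mem_iUnion.1 h
      rw [mem_Icc] at hn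
      have hn1 : 1 ≤ n := by
        by_contra hc
        interval_cases n
        · simp only [Nat.cast_zero] at hn
          linarith [hn.2]
      obtain ⟨m, rfl⟩ := Nat.exists_eq_add_of_le hn1
      refine mem_iUnion.2 ⟨m, ?_⟩
      rw [mem_Icc]
      push_cast at hn ⊢
      constructor <;> linarith [hn.1, hn.2]
  · rintro ⟨T, hT⟩
    obtain ⟨n, hn⟩ := exists_nat_gt T
    have h5n : T < 5 * (n : ℚ) := lt_of_lt_of_le hn (by nlinarith [Nat.cast_nonneg (α := ℚ) n])
    have hmem : (5 * (n : ℚ)) ∈ A := by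
      rw [eqA]
      exact mem_iUnion.2 ⟨n, by rw [mem_Icc]; constructor <;> linarith⟩
    have hnmem : (5 * (n : ℚ) + 4) ∉ A := by
      rw [eqA]
      intro h
      obtain ⟨m, hm⟩ := mem_iUnion.1 h
      rw [mem_Icc] at hm
      have h1 : m ≤ n := hcast m n (by nlinarith [hm.1])
      have h2 : n < m := by
        have : (n : ℚ) < (m : ℚ) := by nlinarith [hm.2]
        exact_mod_cast this
      omega
    have e1 := hT (5 * (n : ℚ)) h5n
    have e2 := hT (5 * (n : ℚ) + 4) (by linarith)
    exact hnmem (e2.2 (e1.1 hmem))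
end

section
/- Let S ⊆ ℚ be nonempty, bounded below, and closed under the operation: if [a, b] ⊆ S (a ≤ b) then [a + t₁, b + t₂] ⊆ S, where t₁ = t₂ = c > 0 (punctual shift). If S₀ = [i₁, i₂] with i₁ ≤ i₂ and i₂ - i₁ < c, then the closure of S₀ is ⋃_{k∈ℕ} [i₁ + kc, i₂ + kc], which is eventually periodic with period c but not eventually constant and not a finite union of intervals. -/
open Set

/-- A punctual diamond rule `◇⁻_{[c,c]} P → P` (Example 1, Mondays): the closure of
`[i₁,i₂]` (with `i₂ - i₁ < c`) under the shift by `c` is an infinite, periodic,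
never-constant union of intervals, not expressible as a finite union of intervals. -/
theorem stmt_12 (c i₁ i₂ : ℚ) (hc : 0 < c) (hi : i₁ ≤ i₂) (hlen : i₂ - i₁ < c)
    (C : Set ℚ)
    (hC : C = ⋂₀ {S : Set ℚ | Icc i₁ i₂ ⊆ S ∧
      ∀ a b : ℚ, a ≤ b → Icc a b ⊆ S → Icc (a + c) (b + c) ⊆ S}) :
    C = (⋃ k : ℕ, Icc (i₁ + (k : ℚ) * c) (i₂ + (k : ℚ) * c)) ∧
    (∀ t : ℚ, i₁ ≤ t → (t ∈ C ↔ t + c ∈ C)) ∧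
    (¬ ∃ T : ℚ, ∀ t : ℚ, T ≤ t → (t ∈ C ↔ T ∈ C)) ∧
    (¬ ∃ (n : ℕ) (u v : Fin n → ℚ), C = ⋃ i, Icc (u i) (v i)) := by
  set U : Set ℚ := ⋃ k : ℕ, Icc (i₁ + (k : ℚ) * c) (i₂ + (k : ℚ) * c) with hU
  have hmem : ∀ x : ℚ, x ∈ U ↔ ∃ k : ℕ, i₁ + (k:ℚ) * c ≤ x ∧ x ≤ i₂ + (k:ℚ) * c := by
    intro x; simp [hU, mem_iUnion]
  have hgap : ∀ (k : ℕ) (x : ℚ), i₂ + (k:ℚ) * c < x → x < i₁ + ((k:ℚ)+1) * c → x ∉ U := by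
    intro k x h1 h2 hx
    rcases (hmem x).1 hx with ⟨j, hj1, hj2⟩
    rcases le_or_gt j k with h | h
    · have : (j:ℚ) * c ≤ (k:ℚ) * c :=
        mul_le_mul_of_nonneg_right (by exact_mod_cast h) hc.le
      linarith
    · have hkj : (k:ℚ) + 1 ≤ (j:ℚ) := by exact_mod_cast h
      have : ((k:ℚ)+1) * c ≤ (j:ℚ) * c :=
        mul_le_mul_of_nonneg_right hkj hc.le
      linarith
  have hUmem : Icc i₁ i₂ ⊆ U ∧ ∀ a b : ℚ, a ≤ b → Icc a b ⊆ U →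
      Icc (a + c) (b + c) ⊆ U := by
    constructor
    · intro x hx
      exact (hmem x).2 ⟨0, by simpa using hx.1, by simpa using hx.2⟩
    · intro a b hab hsub
      have ha : a ∈ U := hsub ⟨le_refl a, hab⟩
      rcases (hmem a).1 ha with ⟨k, hk1, hk2⟩
      have hb : b ≤ i₂ + (k:ℚ) * c := by
        by_contra hb
        push_neg at hb
        have hε : 0 < (c - (i₂ - i₁))/2 := by linarith
        set x := min b (i₂ + (k:ℚ)*c + (c - (i₂ - i₁))/2) with hx
        have hx1 : i₂ + (k:ℚ)*c < x := lt_min hb (by linarith)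
        have hx2 : x < i₁ + ((k:ℚ)+1) * c := by
          have h := min_le_right b (i₂ + (k:ℚ)*c + (c - (i₂ - i₁))/2)
          rw [← hx] at h
          nlinarith
        exact hgap k x hx1 hx2 (hsub ⟨by linarith, min_le_left _ _⟩)
      intro y hy
      refine (hmem y).2 ⟨k+1, ?_, ?_⟩
      · push_cast; nlinarith [hy.1]
      · push_cast; nlinarith [hy.2]
  have hall : ∀ (k : ℕ) (S : Set ℚ), (Icc i₁ i₂ ⊆ S ∧
      ∀ a b : ℚ, a ≤ b → Icc a b ⊆ S → Icc (a + c) (b + c) ⊆ S) →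
      Icc (i₁ + (k:ℚ)*c) (i₂ + (k:ℚ)*c) ⊆ S := by
    intro k
    induction k with
    | zero => intro S hS; simpa using hS.1
    | succ n ih =>
      intro S hS
      have h1 := hS.2 (i₁ + (n:ℚ)*c) (i₂ + (n:ℚ)*c) (by linarith) (ih S hS)
      intro y hy
      apply h1
      constructor
      · push_cast at hy ⊢; linarith [hy.1]
      · push_cast at hy ⊢; linarith [hy.2]
  have hCeq : C = U := by
    rw [hC]
    apply Subset.antisymm
    · exact sInter_subset_of_mem hUmem
    · intro x hx
      rcases (hmem x).1 hx with ⟨k, hk1, hk2⟩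
      intro S hS
      exact hall k S hS ⟨hk1, hk2⟩
  refine ⟨hCeq, ?_, ?_, ?_⟩
  · intro t ht
    rw [hCeq]
    constructor
    · intro htU
      rcases (hmem t).1 htU with ⟨k, hk1, hk2⟩
      refine (hmem _).2 ⟨k+1, ?_, ?_⟩ <;> push_cast <;> linarith
    · intro htU
      rcases (hmem _).1 htU with ⟨j, hj1, hj2⟩
      match j with
      | 0 => simp at hj1 hj2; linarith
      | Nat.succ m =>
        refine (hmem t).2 ⟨m, ?_, ?_⟩ <;> push_cast at hj1 hj2 ⊢ <;> linarith
  · rintro ⟨T, hT⟩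
    obtain ⟨k, hk⟩ := exists_nat_gt ((T - i₁)/c)
    have hkc : T - i₁ < (k:ℚ) * c := by
      rwa [div_lt_iff₀ hc] at hk
    have ht1 : i₁ + (k:ℚ)*c ∈ U := (hmem _).2 ⟨k, le_refl _, by linarith⟩
    have hTC : T ∈ C := (hT (i₁ + (k:ℚ)*c) (by linarith)).1 (hCeq ▸ ht1)
    set g := i₂ + (k:ℚ)*c + (c - (i₂ - i₁))/2 with hg
    have hgU : g ∉ U := hgap k g (by simp [hg]; linarith) (by simp [hg]; linarith)
    have hgT : T ≤ g := by simp [hg]; linarith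
    exact hgU (hCeq ▸ (hT g hgT).2 hTC)
  · rintro ⟨n, u, v, hEq⟩
    have hi₁ : i₁ ∈ C := by
      rw [hCeq]; exact (hmem _).2 ⟨0, by simp, by simpa using hi⟩
    rw [hEq] at hi₁
    rcases mem_iUnion.1 hi₁ with ⟨i0, _⟩
    have hne : (Finset.univ : Finset (Fin n)).Nonempty := ⟨i0, Finset.mem_univ _⟩
    set M := Finset.univ.sup' hne v with hM
    have hbound : ∀ t ∈ C, t ≤ M := by
      intro t ht
      rw [hEq] at ht
      rcases mem_iUnion.1 ht with ⟨i, hi'⟩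
      exact le_trans hi'.2 (Finset.le_sup' v (Finset.mem_univ i))
    obtain ⟨k, hk⟩ := exists_nat_gt ((M - i₁)/c)
    have hkc : M - i₁ < (k:ℚ) * c := by rwa [div_lt_iff₀ hc] at hk
    have : i₁ + (k:ℚ)*c ∈ C := by
      rw [hCeq]; exact (hmem _).2 ⟨k, le_refl _, by linarith⟩
    have := hbound _ this
    linarith
end

section
/- Let f : ℚ → ℚ be the affine map f(x) = x + c with c > 0, and let S ⊆ ℚ be the smallest set containing a finite set F of closed intervals with rational endpoints and closed under I ⊆ S → f(I) ⊆ S. Then there exists T ∈ ℚ and a finite set of intervals P all contained in [T, T + c) such that for all t ≥ T: t ∈ S iff (t mod c relative to T) lies in the projection of P, i.e., S ∩ [T, ∞) = ⋃_{k∈ℕ} (P + k·c). In particular S ∩ [T, ∞) is c-periodic. -/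
/-!
Every point of the closure `S` is a translate `x + k c` of a point `x` of one of the generating
intervals. Choose `T` above all of them: for `t ≥ T`, a representation `t + c = x + k c` must have
`k ≥ 1`, so `t + c ∈ S ↔ t ∈ S`, and `S ∩ [T, ∞)` is the union of the translates of the window
`S ∩ [T, T + c)`. Only finitely many translates of the generators meet the window, and each meets
it in an interval, closed or half-open according as it ends inside the window or runs past it.
-/

open Set

theorem Icc_inter_Ico_eq_ite {α : Type*} [LinearOrder α] (a b T d : α) :
    Icc a b ∩ Ico T d =
      if d ≤ b then Ico (max a T) (min b d) else Icc (max a T) (min b d) := by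
  ext x
  split_ifs with h
  · simp only [mem_inter_iff, mem_Icc, mem_Ico, max_le_iff, lt_min_iff]
    constructor
    · rintro ⟨⟨h1, h2⟩, h3, h4⟩; exact ⟨⟨h1, h3⟩, h4.trans_le h, h4⟩
    · rintro ⟨⟨h1, h3⟩, h2, h4⟩; exact ⟨⟨h1, h2.le⟩, h3, h4⟩
  · simp only [mem_inter_iff, mem_Icc, mem_Ico, max_le_iff, le_min_iff]
    constructor
    · rintro ⟨⟨h1, h2⟩, h3, h4⟩; exact ⟨⟨h1, h3⟩, h2, h4.le⟩
    · rintro ⟨⟨h1, h3⟩, h2, h4⟩; exact ⟨⟨h1, h2⟩, h3, h2.trans_lt (not_le.mp h)⟩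

theorem exists_fin_intervals_iUnion_eq {ι α : Type*} [Fintype ι] [LinearOrder α]
    (lo hi : ι → α) (T d : α) :
    ∃ (m : ℕ) (u v : Fin m → α) (o : Fin m → Bool),
      (∀ i, (if o i then Ico (u i) (v i) else Icc (u i) (v i)) ⊆ Ico T d) ∧
      ⋃ i, (if o i then Ico (u i) (v i) else Icc (u i) (v i)) =
        ⋃ j, Icc (lo j) (hi j) ∩ Ico T d := by
  let e := (Fintype.equivFin ι).symm
  refine ⟨Fintype.card ι, fun i => max (lo (e i)) T, fun i => min (hi (e i)) d,
    fun i => decide (d ≤ hi (e i)), fun i => ?_, ?_⟩ <;>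
  simp only [decide_eq_true_eq, ← Icc_inter_Ico_eq_ite]
  · exact inter_subset_right
  · exact e.surjective.iUnion_comp fun j => Icc (lo j) (hi j) ∩ Ico T d

section Closure

variable {α ι : Type*} [Semiring α]

def shiftClosure (c : α) (F : ι → Set α) : Set α :=
  ⋃ k : ℕ, ⋃ i, (· + k * c) '' F i

theorem add_mem_shiftClosure {c t : α} {F : ι → Set α} (ht : t ∈ shiftClosure c F) :
    t + c ∈ shiftClosure c F := by
  simp only [shiftClosure, mem_iUnion, mem_image] at ht ⊢
  obtain ⟨k, i, x, hx, rfl⟩ := ht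
  exact ⟨k + 1, i, x, hx, by rw [Nat.cast_succ, add_one_mul, add_assoc]⟩

theorem sInter_shiftClosed_eq_shiftClosure (c : α) (F : ι → Set α) :
    ⋂₀ {X : Set α | (∀ i, F i ⊆ X) ∧ ∀ t ∈ X, t + c ∈ X} = shiftClosure c F := by
  apply Subset.antisymm
  · exact sInter_subset_of_mem ⟨fun i x hx => mem_iUnion₂.2 ⟨0, i, x, hx, by simp⟩,
      fun _ => add_mem_shiftClosure⟩
  · refine subset_sInter fun X ⟨hF, hX⟩ => iUnion₂_subset fun k i => ?_
    induction k with
    | zero => simpa using hF i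
    | succ k ih =>
      rintro _ ⟨x, hx, rfl⟩
      simpa [add_mul, add_assoc] using hX _ (ih ⟨x, hx, rfl⟩)

end Closure

variable {α ι : Type*} [Field α] [LinearOrder α] [IsStrictOrderedRing α]

theorem mem_shiftClosure_of_add_mem {c T t : α} {F : ι → Set α} (hc : 0 ≤ c)
    (hF : ∀ i, F i ⊆ Iio T) (ht : T ≤ t) (h : t + c ∈ shiftClosure c F) :
    t ∈ shiftClosure c F := by
  simp only [shiftClosure, mem_iUnion, mem_image] at h ⊢
  obtain ⟨k, i, x, hx, hxt⟩ := h
  cases k with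
  | zero =>
    have : x < T := hF i hx
    simp only [Nat.cast_zero, zero_mul, add_zero] at hxt
    linarith
  | succ k => exact ⟨k, i, x, hx, by push_cast at hxt; linarith⟩

theorem shiftClosure_Icc_inter_Ico {c T : α} {N : ℕ} (a b : ι → α) (hc : 0 ≤ c)
    (hN : ∀ i, T + c ≤ a i + N * c) :
    shiftClosure c (fun i => Icc (a i) (b i)) ∩ Ico T (T + c) =
      ⋃ j : Fin N × ι, Icc (a j.2 + j.1 * c) (b j.2 + j.1 * c) ∩ Ico T (T + c) := by
  ext x
  simp only [shiftClosure, image_add_const_Icc, mem_inter_iff, mem_iUnion, Prod.exists]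
  constructor
  · rintro ⟨⟨k, i, hx⟩, hxw⟩
    have hk : k < N := by
      by_contra! h
      have : (N : α) * c ≤ k * c := mul_le_mul_of_nonneg_right (by exact_mod_cast h) hc
      linarith [hN i, hx.1, hxw.2]
    exact ⟨⟨k, hk⟩, i, hx, hxw⟩
  · rintro ⟨k, i, hx, hxw⟩
    exact ⟨⟨k, i, hx⟩, hxw⟩

section Periodic

variable {S : Set α} {c T : α}

theorem add_natCast_mul_mem_iff (hc : 0 ≤ c) (hf : ∀ t ∈ S, t + c ∈ S)
    (hb : ∀ t, T ≤ t → t + c ∈ S → t ∈ S) {y : α} (hy : T ≤ y) (k : ℕ) :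
    y + k * c ∈ S ↔ y ∈ S := by
  induction k with
  | zero => simp
  | succ k ih =>
    have hyk : T ≤ y + k * c := le_add_of_le_of_nonneg hy (by positivity)
    rw [← ih, Nat.cast_succ, add_one_mul, ← add_assoc]
    exact ⟨hb _ hyk, hf _⟩

theorem exists_sub_natCast_mul_mem_Ico [FloorSemiring α] (hc : 0 < c) {x : α} (hx : T ≤ x) :
    ∃ k : ℕ, x - k * c ∈ Ico T (T + c) := by
  refine ⟨⌊(x - T) / c⌋₊, ?_, ?_⟩
  · have := Nat.floor_le (div_nonneg (sub_nonneg.2 hx) hc.le)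
    rw [le_div_iff₀ hc] at this
    linarith
  · have := Nat.lt_floor_add_one ((x - T) / c)
    rw [div_lt_iff₀ hc] at this
    linarith

theorem inter_Ici_eq_iUnion_image_inter_Ico [FloorSemiring α] (hc : 0 < c)
    (hf : ∀ t ∈ S, t + c ∈ S) (hb : ∀ t, T ≤ t → t + c ∈ S → t ∈ S) :
    S ∩ Ici T = ⋃ k : ℕ, (· + k * c) '' (S ∩ Ico T (T + c)) := by
  ext x
  simp only [mem_inter_iff, mem_Ici, mem_iUnion, mem_image, mem_Ico]
  constructor
  · rintro ⟨hxS, hx⟩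
    obtain ⟨k, hk⟩ := exists_sub_natCast_mul_mem_Ico hc hx
    refine ⟨k, x - k * c, ⟨?_, hk⟩, sub_add_cancel _ _⟩
    rwa [← add_natCast_mul_mem_iff hc.le hf hb hk.1 k, sub_add_cancel]
  · rintro ⟨k, y, ⟨hyS, hy, -⟩, rfl⟩
    exact ⟨(add_natCast_mul_mem_iff hc.le hf hb hy k).2 hyS,
      le_add_of_le_of_nonneg hy (by positivity)⟩

end Periodic

/-- Pattern detection (Algorithm 2): the minimal model of a punctual-shift program
(closure of finitely many intervals under `x ↦ x + c`) agrees, past some `T`, with a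
finite pattern `P ⊆ [T, T+c)` of intervals repeated with period `c`. -/
theorem stmt_15 (c : ℚ) (hc : 0 < c) (n : ℕ) (a b : Fin n → ℚ)
    (S : Set ℚ)
    (hS : S = ⋂₀ {X : Set ℚ | (∀ i, Icc (a i) (b i) ⊆ X) ∧ ∀ t ∈ X, t + c ∈ X}) :
    ∃ T : ℚ, ∃ (m : ℕ) (u v : Fin m → ℚ) (o : Fin m → Bool),
      (∀ i, (if o i then Ico (u i) (v i) else Icc (u i) (v i)) ⊆ Ico T (T + c)) ∧
      (S ∩ Ici T =
        ⋃ k : ℕ, ⋃ i,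
          (fun x => x + (k : ℚ) * c) '' (if o i then Ico (u i) (v i) else Icc (u i) (v i))) ∧
      (∀ t : ℚ, T ≤ t → (t ∈ S ↔ t + c ∈ S)) := by
  rw [sInter_shiftClosed_eq_shiftClosure c fun i => Icc (a i) (b i)] at hS
  -- `T = M + 1` lies above every generator, and from the `N`-th translate on the generators
  -- lie beyond the window `[T, T + c)`.
  obtain ⟨M, hM⟩ := Finite.exists_le b
  obtain ⟨L, hL⟩ := Finite.exists_ge a
  obtain ⟨N, hN⟩ := Archimedean.arch (M + 1 + c - L) hc
  rw [nsmul_eq_mul] at hN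
  have hF (i : Fin n) : Icc (a i) (b i) ⊆ Iio (M + 1) := fun x hx =>
    show x < M + 1 by linarith [hx.2, hM i]
  have hf : ∀ t ∈ S, t + c ∈ S := hS ▸ fun _ => add_mem_shiftClosure
  have hb : ∀ t, M + 1 ≤ t → t + c ∈ S → t ∈ S :=
    hS ▸ fun _ => mem_shiftClosure_of_add_mem hc.le hF
  obtain ⟨m, u, v, o, hsub, hpat⟩ := exists_fin_intervals_iUnion_eq
    (fun j : Fin N × Fin n => a j.2 + j.1 * c) (fun j => b j.2 + j.1 * c) (M + 1) (M + 1 + c)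
  refine ⟨M + 1, m, u, v, o, hsub, ?_, fun t ht => ⟨hf t, hb t ht⟩⟩
  rw [inter_Ici_eq_iUnion_image_inter_Ico hc hf hb, hS,
    shiftClosure_Icc_inter_Ico a b hc.le fun i => by linarith [hL i], ← hpat]
  simp only [image_iUnion]
end

section
/- Let A, B ⊆ ℚ be the smallest sets satisfying: [0,1] ⊆ A; if s ∈ A and t - s ∈ [3,4] then t ∈ B; if [t-4, t-3] ⊆ B then t ∈ A. Then A = ⋃_{n∈ℕ} [7n, 7n+1] and B = ⋃_{n∈ℕ} [7n+3, 7n+5]. In particular the minimal model of this program is exactly periodic with period 7 starting from time 0. -/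
open Set

/-- Worked example of Section 5: database `A@[0,1]` with rules `◇⁻_{[3,4]} A → B`
and `□⁻_{[3,4]} B → A` has the exactly period-7 minimal model
`A = ⋃ₙ [7n, 7n+1]`, `B = ⋃ₙ [7n+3, 7n+5]`. -/
theorem stmt_19 (A B : Set ℚ)
    (hA1 : Icc (0 : ℚ) 1 ⊆ A)
    (hAB : ∀ s t : ℚ, s ∈ A → t - s ∈ Icc (3 : ℚ) 4 → t ∈ B)
    (hBA : ∀ t : ℚ, Icc (t - 4) (t - 3) ⊆ B → t ∈ A)
    (hmin : ∀ A' B' : Set ℚ,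
      (Icc (0 : ℚ) 1 ⊆ A' ∧
       (∀ s t : ℚ, s ∈ A' → t - s ∈ Icc (3 : ℚ) 4 → t ∈ B') ∧
       (∀ t : ℚ, Icc (t - 4) (t - 3) ⊆ B' → t ∈ A')) →
      A ⊆ A' ∧ B ⊆ B') :
    A = (⋃ n : ℕ, Icc (7 * (n : ℚ)) (7 * (n : ℚ) + 1)) ∧
    B = (⋃ n : ℕ, Icc (7 * (n : ℚ) + 3) (7 * (n : ℚ) + 5)) := by
  set UA : Set ℚ := ⋃ n : ℕ, Icc (7 * (n : ℚ)) (7 * (n : ℚ) + 1) with hUA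
  set UB : Set ℚ := ⋃ n : ℕ, Icc (7 * (n : ℚ) + 3) (7 * (n : ℚ) + 5) with hUB
  -- the unions satisfy the closure properties
  have hclos : Icc (0 : ℚ) 1 ⊆ UA ∧
      (∀ s t : ℚ, s ∈ UA → t - s ∈ Icc (3 : ℚ) 4 → t ∈ UB) ∧
      (∀ t : ℚ, Icc (t - 4) (t - 3) ⊆ UB → t ∈ UA) := by
    refine ⟨?_, ?_, ?_⟩
    · intro x hx
      simp only [hUA, mem_iUnion, mem_Icc] at *
      exact ⟨0, by push_cast; linarith [hx.1], by push_cast; linarith [hx.2]⟩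
    · intro s t hs ht
      simp only [hUA, hUB, mem_iUnion, mem_Icc] at *
      obtain ⟨n, hn1, hn2⟩ := hs
      exact ⟨n, by linarith [ht.1], by linarith [ht.2]⟩
    · intro t hsub
      have h1 : t - 4 ∈ UB := hsub (mem_Icc.2 ⟨le_refl _, by linarith⟩)
      have h2 : t - 3 ∈ UB := hsub (mem_Icc.2 ⟨by linarith, le_refl _⟩)
      simp only [hUB, mem_iUnion, mem_Icc] at h1 h2
      obtain ⟨n, hn1, hn2⟩ := h1
      obtain ⟨m, hm1, hm2⟩ := h2
      rcases le_or_gt t (7 * (n : ℚ) + 8) with h | h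
      · simp only [hUA, mem_iUnion, mem_Icc]
        exact ⟨n + 1, by push_cast; constructor <;> linarith⟩
      · exfalso
        have hnm : (n : ℚ) < m := by linarith
        have hnm' : n < m := by exact_mod_cast hnm
        have : (n : ℚ) + 1 ≤ m := by exact_mod_cast Nat.succ_le_of_lt hnm'
        linarith
  -- the step from A-interval to B-interval
  have stepB : ∀ n : ℕ, Icc (7 * (n : ℚ)) (7 * (n : ℚ) + 1) ⊆ A →
      Icc (7 * (n : ℚ) + 3) (7 * (n : ℚ) + 5) ⊆ B := by
    intro n hAn t ht
    obtain ⟨ht1, ht2⟩ := mem_Icc.1 ht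
    rcases le_total (7 * (n : ℚ)) (t - 4) with h | h
    · exact hAB (t - 4) t (hAn (mem_Icc.2 ⟨h, by linarith⟩)) (mem_Icc.2 ⟨by linarith, by linarith⟩)
    · exact hAB (7 * (n : ℚ)) t (hAn (mem_Icc.2 ⟨le_refl _, by linarith⟩))
        (mem_Icc.2 ⟨by linarith, by linarith⟩)
  -- induction: each interval is contained in A resp. B
  have key : ∀ n : ℕ, Icc (7 * (n : ℚ)) (7 * (n : ℚ) + 1) ⊆ A ∧
      Icc (7 * (n : ℚ) + 3) (7 * (n : ℚ) + 5) ⊆ B := by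
    intro n
    induction n with
    | zero =>
      have hA0 : Icc (7 * ((0 : ℕ) : ℚ)) (7 * ((0 : ℕ) : ℚ) + 1) ⊆ A := by
        intro x hx; apply hA1; simpa using hx
      exact ⟨hA0, stepB 0 hA0⟩
    | succ n ih =>
      have hAn : Icc (7 * ((n + 1 : ℕ) : ℚ)) (7 * ((n + 1 : ℕ) : ℚ) + 1) ⊆ A := by
        intro t ht
        obtain ⟨ht1, ht2⟩ := mem_Icc.1 ht
        push_cast at ht1 ht2
        apply hBA
        intro x hx
        obtain ⟨hx1, hx2⟩ := mem_Icc.1 hx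
        exact ih.2 (mem_Icc.2 ⟨by linarith, by linarith⟩)
      exact ⟨hAn, stepB (n + 1) hAn⟩
  obtain ⟨hAsub, hBsub⟩ := hmin UA UB hclos
  constructor
  · apply Subset.antisymm hAsub
    intro x hx
    simp only [hUA, mem_iUnion] at hx
    obtain ⟨n, hn⟩ := hx
    exact (key n).1 hn
  · apply Subset.antisymm hBsub
    intro x hx
    simp only [hUB, mem_iUnion] at hx
    obtain ⟨n, hn⟩ := hx
    exact (key n).2 hn
end
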